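/- If $f \perp g$ in $A^\sim$ (i.e., $|f| \wedge |g| = 0$), then $F \cdot f \perp G \cdot g$ for all $F, G \in (A^\sim)^\sim_n$. -/

import Mathlib

/-!
For `F ≥ 0`, the map `f ↦ F ⋅ f` preserves disjointness from any `g`. Since
`|F ⋅ f| ≤ |F| ⋅ |f|`, applying this twice gives the theorem.

Let `k = (F ⋅ f) ⊓ g` and `a ≥ 0`. First `f ⋅ a ⊥ g`: cut a test element `x` along multiples
of the `g`-part of a Riesz–Kantorovich splitting of `a x`. So `k ⊥ f ⋅ a` as well, which gives
`a = bₙ + cₙ` with `k bₙ + f (a cₙ) < 2⁻ⁿ`, and hence `k a ≤ 2⁻ⁿ + F (f ⋅ cₙ)`. The functionals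
`f ⋅ cₙ` lie below `f ⋅ a` and take values `≤ 2⁻ⁿ` at `a`. Their tail suprema therefore
decrease to `0`: a common lower bound `e ≥ 0` is at most `f ⋅ a` and has `e a = 0`, so
`n e(x) ≤ f (x²)` for every `n`. Now order continuity of `F` gives `F (f ⋅ cₙ) → 0`.

The suprema and infima in `A^∼` used here exist because positive, additive, order bounded
functions on the positive cone of `A` are restrictions of elements of `A^∼`.
-/

noncomputable section

/-- Riesz space (real vector lattice) axioms, as a `Prop`-valued class. -/
class RieszSp (E : Type*) [AddCommGroup E] [Lattice E] [Module ℝ E] : Prop where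
  add_le_add_left : ∀ a b : E, a ≤ b → ∀ c : E, c + a ≤ c + b
  smul_nonneg : ∀ (r : ℝ) (a : E), 0 ≤ r → 0 ≤ a → 0 ≤ r • a

/-- Archimedean (real) f-algebra axioms, as a `Prop`-valued class. -/
class FAlg (A : Type*) [CommRing A] [Lattice A] [Module ℝ A] extends RieszSp A : Prop where
  mul_nonneg : ∀ a b : A, 0 ≤ a → 0 ≤ b → 0 ≤ a * b
  disjoint_mul : ∀ a b c : A, a ⊓ b = 0 → 0 ≤ c → (c * a) ⊓ b = 0
  archimedean : ∀ a b : A, (∀ n : ℕ, (n : ℝ) • a ≤ b) → a ≤ 0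

/-- A linear functional is order bounded if it is bounded on order intervals. -/
def OrderBddFn {E : Type*} [AddCommGroup E] [Lattice E] [Module ℝ E]
    (φ : E →ₗ[ℝ] ℝ) : Prop :=
  ∀ a b : E, ∃ M : ℝ, ∀ x : E, a ≤ x → x ≤ b → |φ x| ≤ M

/-- A linear functional is order continuous if it sends downward directed sets with
infimum `0` to nets converging to `0`. -/
def OrdContFn {E : Type*} [AddCommGroup E] [Lattice E] [Module ℝ E]
    (φ : E →ₗ[ℝ] ℝ) : Prop :=
  ∀ s : Set E, s.Nonempty → DirectedOn (· ≥ ·) s → IsGLB s 0 →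
    ∀ ε : ℝ, 0 < ε → ∃ d ∈ s, ∀ d' ∈ s, d' ≤ d → |φ d'| < ε

/-- The data realizing `D` as the order dual `A^∼` of the f-algebra `A` (with separating
order dual) and `N` as the order continuous part `(A^∼)^∼_n` of the order bidual of `A`,
together with the Arens multiplication and its actions. -/
class DualSetting (A : Type*) [CommRing A] [Lattice A] [Module ℝ A]
    (D : Type*) [AddCommGroup D] [Lattice D] [Module ℝ D]
    (N : Type*) [CommRing N] [Lattice N] [Module ℝ N] where
  dual : D →ₗ[ℝ] A →ₗ[ℝ] ℝ
  bidual : N →ₗ[ℝ] D →ₗ[ℝ] ℝ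
  dual_inj : Function.Injective dual
  bidual_inj : Function.Injective bidual
  dual_bdd : ∀ d : D, OrderBddFn (dual d)
  dual_surj : ∀ φ : A →ₗ[ℝ] ℝ, OrderBddFn φ → ∃ d : D, dual d = φ
  dual_order : ∀ d : D, 0 ≤ d ↔ ∀ a : A, 0 ≤ a → 0 ≤ dual d a
  bidual_bdd : ∀ F : N, OrderBddFn (bidual F)
  bidual_cont : ∀ F : N, OrdContFn (bidual F)
  bidual_surj : ∀ Φ : D →ₗ[ℝ] ℝ, OrderBddFn Φ → OrdContFn Φ → ∃ F : N, bidual F = Φ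
  bidual_order : ∀ F : N, 0 ≤ F ↔ ∀ d : D, 0 ≤ d → 0 ≤ bidual F d
  separating : ∀ a : A, (∀ d : D, dual d a = 0) → a = 0
  /-- the action `f ⋅ a` of `A` on `A^∼`:  `(f ⋅ a)(b) = f (a b)` -/
  dsmul : A → D → D
  dsmul_eval : ∀ (a : A) (f : D) (b : A), dual (dsmul a f) b = dual f (a * b)
  /-- the action `F ⋅ f` of `(A^∼)^∼_n` on `A^∼`:  `(F ⋅ f)(a) = F (f ⋅ a)` -/
  nsmul : N → D → D
  nsmul_eval : ∀ (F : N) (f : D) (a : A), dual (nsmul F f) a = bidual F (dsmul a f)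
  /-- the Arens product on `(A^∼)^∼_n`:  `(F * G)(f) = F (G ⋅ f)` -/
  mul_eval : ∀ (F G : N) (f : D), bidual (F * G) f = bidual F (nsmul G f)

lemma nonpos_of_forall_nat_mul_le {K : Type*} [Field K] [LinearOrder K] [IsStrictOrderedRing K]
    [Archimedean K] {t C : K} (h : ∀ n : ℕ, n * t ≤ C) : t ≤ 0 := by
  by_contra! ht
  obtain ⟨n, hn⟩ := exists_nat_gt (C / t)
  rw [div_lt_iff₀ ht] at hn
  exact (h n).not_gt hn

section LatticeOrderedGroup
variable {X : Type*} [AddCommGroup X] [Lattice X] [IsOrderedAddMonoid X]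

lemma le_of_le_add_of_inf_eq_zero {u v q : X} (hv : 0 ≤ v) (huq : u ⊓ q = 0)
    (h : u ≤ v + q) : u ≤ v := by
  have hu : 0 ≤ u := huq ▸ inf_le_left
  have hq : 0 ≤ q := huq ▸ inf_le_right
  have h1 : (u - v)⁺ ≤ u := sup_le (sub_le_self u hv) hu
  have h2 : (u - v)⁺ ≤ q := sup_le (sub_le_iff_le_add'.2 h) hq
  exact sub_nonpos.1 ((le_posPart _).trans (huq ▸ le_inf h1 h2))

lemma inf_add_posPart_sub (x y : X) : x ⊓ y + (x - y)⁺ = x := by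
  have h : (x - y)⁺ = x ⊔ y - y := by rw [posPart_def, sup_sub, sub_self]
  rw [h, ← add_sub_assoc, inf_add_sup, add_sub_cancel_right]

lemma partialSups_le_sum {u : ℕ → X} (hu : ∀ k, 0 ≤ u k) (n : ℕ) :
    partialSups u n ≤ ∑ k ∈ Finset.range (n + 1), u k := by
  induction n with
  | zero => simp
  | succ n ih =>
    rw [Finset.sum_range_succ]
    exact (partialSups_succ u n).trans_le <| sup_le (le_add_of_le_of_nonneg ih (hu _))
      (le_add_of_nonneg_left (Finset.sum_nonneg fun k _ => hu k))

end LatticeOrderedGroup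

section RieszSpace
variable {X : Type*} [AddCommGroup X] [Lattice X] [Module ℝ X] [RieszSp X]

instance (priority := 100) RieszSp.toIsOrderedAddMonoid : IsOrderedAddMonoid X where
  add_le_add_left a b h c := by simpa only [add_comm c] using RieszSp.add_le_add_left a b h c

instance (priority := 100) RieszSp.toPosSMulMono : PosSMulMono ℝ X :=
  PosSMulMono.of_smul_nonneg fun r hr x hx => RieszSp.smul_nonneg r x hr hx

lemma exists_linearMap_eq_on_nonneg (p : X → ℝ)
    (hadd : ∀ x y : X, 0 ≤ x → 0 ≤ y → p (x + y) = p x + p y)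
    (hsmul : ∀ (r : ℝ) (x : X), 0 < r → 0 ≤ x → p (r • x) ≤ r * p x) :
    ∃ φ : X →ₗ[ℝ] ℝ, ∀ x : X, 0 ≤ x → φ x = p x := by
  have hsmul' : ∀ (r : ℝ) (x : X), 0 < r → 0 ≤ x → p (r • x) = r * p x := by
    intro r x hr hx
    refine le_antisymm (hsmul r x hr hx) ?_
    have h := hsmul r⁻¹ (r • x) (inv_pos.2 hr) (smul_nonneg hr.le hx)
    rw [inv_smul_smul₀ hr.ne'] at h
    calc r * p x ≤ r * (r⁻¹ * p (r • x)) := mul_le_mul_of_nonneg_left h hr.le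
      _ = p (r • x) := by field_simp
  have h0 : p 0 = 0 := by simpa using hadd 0 0 le_rfl le_rfl
  have hdiff : ∀ x u v : X, 0 ≤ u → 0 ≤ v → x = u - v → p x⁺ - p x⁻ = p u - p v := by
    intro x u v hu hv hx
    have h : x⁺ + v = u + x⁻ := sub_eq_sub_iff_add_eq_add.1 (by rw [posPart_sub_negPart, hx])
    have := congrArg p h
    rw [hadd _ _ (posPart_nonneg x) hv, hadd _ _ hu (negPart_nonneg x)] at this
    linarith
  refine ⟨{ toFun := fun x => p x⁺ - p x⁻, map_add' := ?_, map_smul' := ?_ }, ?_⟩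
  · intro x y
    rw [hdiff (x + y) (x⁺ + y⁺) (x⁻ + y⁻) (add_nonneg (posPart_nonneg x) (posPart_nonneg y))
      (add_nonneg (negPart_nonneg x) (negPart_nonneg y))
      (by rw [add_sub_add_comm, posPart_sub_negPart, posPart_sub_negPart]),
      hadd _ _ (posPart_nonneg x) (posPart_nonneg y),
      hadd _ _ (negPart_nonneg x) (negPart_nonneg y)]
    ring
  · intro r x
    simp only [RingHom.id_apply, smul_eq_mul]
    rcases lt_trichotomy r 0 with hr | rfl | hr
    · have hr' : 0 < -r := neg_pos.2 hr
      rw [hdiff (r • x) ((-r) • x⁻) ((-r) • x⁺) (smul_nonneg hr'.le (negPart_nonneg x))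
        (smul_nonneg hr'.le (posPart_nonneg x))
        (by rw [← smul_sub, ← neg_sub, posPart_sub_negPart, smul_neg, neg_smul, neg_neg]),
        hsmul' _ _ hr' (negPart_nonneg x), hsmul' _ _ hr' (posPart_nonneg x)]
      ring
    · simp [h0]
    · rw [hdiff (r • x) (r • x⁺) (r • x⁻) (smul_nonneg hr.le (posPart_nonneg x))
        (smul_nonneg hr.le (negPart_nonneg x)) (by rw [← smul_sub, posPart_sub_negPart]),
        hsmul' _ _ hr (posPart_nonneg x), hsmul' _ _ hr (negPart_nonneg x)]
      ring
  · intro x hx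
    simp [posPart_eq_self.2 hx, negPart_eq_zero.2 hx, h0]

end RieszSpace

section FAlgebra
variable {A : Type*} [CommRing A] [Lattice A] [Module ℝ A] [FAlg A]

instance (priority := 100) FAlg.toPosMulMono : PosMulMono A where
  mul_le_mul_of_nonneg_left a ha b c hbc := by
    simpa only [mul_sub, sub_nonneg] using FAlg.mul_nonneg a (c - b) ha (sub_nonneg.2 hbc)

instance (priority := 100) FAlg.toMulPosMono : MulPosMono A :=
  posMulMono_iff_mulPosMono.1 inferInstance

lemma FAlg.mul_eq_zero_of_inf_eq_zero {u v : A} (h : u ⊓ v = 0) : u * v = 0 := by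
  have hu : 0 ≤ u := h ▸ inf_le_left
  have hv : 0 ≤ v := h ▸ inf_le_right
  have hvu : (v * u) ⊓ v = 0 := FAlg.disjoint_mul u v v h hv
  have huv : (u * v) ⊓ (v * u) = 0 := FAlg.disjoint_mul v (v * u) u (by rwa [inf_comm]) hu
  rwa [mul_comm v u, inf_idem] at huv

lemma mul_posPart_sub_le_mul_self {b x : A} (hb : 0 ≤ b) (hx : 0 ≤ x) :
    b * (x - b)⁺ ≤ x * x := by
  set p := (x - b)⁺
  have hp : 0 ≤ p := posPart_nonneg _
  have hpx : p ≤ x := sup_le (sub_le_self x hb) hx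
  have hb' : b = x - (p - (x - b)⁻) := by rw [posPart_sub_negPart, sub_sub_cancel]
  have hpq : p * (x - b)⁻ = 0 :=
    FAlg.mul_eq_zero_of_inf_eq_zero (posPart_inf_negPart_eq_zero _)
  calc b * p = x * p - p * p := by linear_combination p * hb' + hpq
    _ ≤ x * p := sub_le_self _ (mul_nonneg hp hp)
    _ ≤ x * x := mul_le_mul_of_nonneg_left hpx hx

lemma mul_posPart_sub_le_add {b x v c : A} (hb : 0 ≤ b) (hx : 0 ≤ x) (hv : 0 ≤ v)
    (hc : 0 ≤ c) (h : v + c = b * x) : b * (x - c)⁺ ≤ v + x := by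
  set p := (x - c)⁺
  have hp : 0 ≤ p := posPart_nonneg _
  have hpx : p ≤ x := sup_le (sub_le_self x hc) hx
  set q := (x - c)⁻
  have hc' : c = x - (p - q) := by rw [posPart_sub_negPart, sub_sub_cancel]
  refine le_of_le_add_of_inf_eq_zero (add_nonneg hv hx)
    (FAlg.disjoint_mul p q b (posPart_inf_negPart_eq_zero _) hb) ?_
  calc b * p ≤ b * x := mul_le_mul_of_nonneg_left hpx hb
    _ = v + x + q - p := by rw [← h, hc']; abel
    _ ≤ v + x + q := sub_le_self _ hp

end FAlgebra

lemma abs_apply_le_apply_abs {M E : Type*} [AddCommGroup M] [Lattice M] [IsOrderedAddMonoid M]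
    [Module ℝ M] [AddCommGroup E] [Lattice E] [IsOrderedAddMonoid E] [Module ℝ E]
    (B : M →ₗ[ℝ] E →ₗ[ℝ] ℝ) (hB : ∀ m e, 0 ≤ m → 0 ≤ e → 0 ≤ B m e) (m : M) (e : E) :
    |B m e| ≤ B |m| |e| := by
  have h₁ := hB _ _ (posPart_nonneg m) (posPart_nonneg e)
  have h₂ := hB _ _ (posPart_nonneg m) (negPart_nonneg e)
  have h₃ := hB _ _ (negPart_nonneg m) (posPart_nonneg e)
  have h₄ := hB _ _ (negPart_nonneg m) (negPart_nonneg e)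
  rw [← posPart_add_negPart m, ← posPart_add_negPart e]
  conv_lhs => rw [← posPart_sub_negPart m, ← posPart_sub_negPart e]
  simp only [map_add, map_sub, LinearMap.add_apply, LinearMap.sub_apply]
  exact abs_le.2 ⟨by linarith, by linarith⟩

namespace DualSetting

section Evaluation
variable {A : Type*} [CommRing A] [Lattice A] [Module ℝ A]
  {D : Type*} [AddCommGroup D] [Lattice D] [Module ℝ D]
  {N : Type*} [CommRing N] [Lattice N] [Module ℝ N] (P : DualSetting A D N)

lemma dual_nonneg {d : D} (hd : 0 ≤ d) {a : A} (ha : 0 ≤ a) : 0 ≤ P.dual d a :=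
  (P.dual_order d).1 hd a ha

lemma bidual_nonneg {F : N} (hF : 0 ≤ F) {d : D} (hd : 0 ≤ d) : 0 ≤ P.bidual F d :=
  (P.bidual_order F).1 hF d hd

/-- The Riesz–Kantorovich formula, which computes `(d₁ ⊓ d₂) x` for positive `d₁, d₂`. -/
def rieszKantorovich (d₁ d₂ : D) (x : A) : ℝ :=
  sInf ((fun b => P.dual d₁ b + P.dual d₂ (x - b)) '' Set.Icc 0 x)

lemma le_rieszKantorovich {d₁ d₂ : D} {x : A} (hx : 0 ≤ x) {c : ℝ}
    (h : ∀ b ∈ Set.Icc 0 x, c ≤ P.dual d₁ b + P.dual d₂ (x - b)) :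
    c ≤ P.rieszKantorovich d₁ d₂ x :=
  le_csInf ⟨_, 0, Set.left_mem_Icc.2 hx, rfl⟩ (by rintro _ ⟨b, hb, rfl⟩; exact h b hb)

section
variable [RieszSp A]

lemma dual_mono_right {d : D} (hd : 0 ≤ d) {a b : A} (h : a ≤ b) :
    P.dual d a ≤ P.dual d b := by
  simpa only [map_sub, sub_nonneg] using P.dual_nonneg hd (sub_nonneg.2 h)

lemma exists_dual_eq_on_nonneg (p : A → ℝ)
    (hadd : ∀ x y : A, 0 ≤ x → 0 ≤ y → p (x + y) = p x + p y)
    (hsmul : ∀ (r : ℝ) (x : A), 0 < r → 0 ≤ x → p (r • x) ≤ r * p x)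
    {d : D} (hp : ∀ x : A, 0 ≤ x → 0 ≤ p x ∧ p x ≤ P.dual d x) :
    ∃ m : D, ∀ x : A, 0 ≤ x → P.dual m x = p x := by
  obtain ⟨φ, hφ⟩ := exists_linearMap_eq_on_nonneg p hadd hsmul
  have hd : 0 ≤ d := (P.dual_order d).2 fun x hx => (hp x hx).1.trans (hp x hx).2
  have hφ_bdd : OrderBddFn φ := by
    intro l u
    refine ⟨P.dual d u⁺ + P.dual d l⁻, fun y hly hyu => ?_⟩
    have hy : φ y = p y⁺ - p y⁻ := by
      rw [← hφ _ (posPart_nonneg y), ← hφ _ (negPart_nonneg y), ← map_sub, posPart_sub_negPart]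
    have h₁ := hp _ (posPart_nonneg y)
    have h₂ := hp _ (negPart_nonneg y)
    have h₃ := P.dual_mono_right hd (posPart_mono hyu)
    have h₄ := P.dual_mono_right hd (negPart_anti hly)
    rw [hy, abs_le]
    constructor <;> linarith
  obtain ⟨m, rfl⟩ := P.dual_surj φ hφ_bdd
  exact ⟨m, hφ⟩

lemma rieszKantorovich_le {d₁ d₂ : D} (hd₁ : 0 ≤ d₁) (hd₂ : 0 ≤ d₂) {x b : A}
    (hb : b ∈ Set.Icc 0 x) : P.rieszKantorovich d₁ d₂ x ≤ P.dual d₁ b + P.dual d₂ (x - b) := by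
  refine csInf_le ⟨0, ?_⟩ ⟨b, hb, rfl⟩
  rintro _ ⟨b', hb', rfl⟩
  exact add_nonneg (P.dual_nonneg hd₁ hb'.1) (P.dual_nonneg hd₂ (sub_nonneg.2 hb'.2))

lemma rieszKantorovich_nonneg {d₁ d₂ : D} (hd₁ : 0 ≤ d₁) (hd₂ : 0 ≤ d₂) {x : A} (hx : 0 ≤ x) :
    0 ≤ P.rieszKantorovich d₁ d₂ x :=
  P.le_rieszKantorovich hx fun _ hb =>
    add_nonneg (P.dual_nonneg hd₁ hb.1) (P.dual_nonneg hd₂ (sub_nonneg.2 hb.2))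

lemma rieszKantorovich_smul_le {d₁ d₂ : D} (hd₁ : 0 ≤ d₁) (hd₂ : 0 ≤ d₂) {r : ℝ} (hr : 0 < r)
    {x : A} (hx : 0 ≤ x) :
    P.rieszKantorovich d₁ d₂ (r • x) ≤ r * P.rieszKantorovich d₁ d₂ x := by
  rw [← div_le_iff₀' hr]
  refine P.le_rieszKantorovich hx fun b hb => (div_le_iff₀' hr).2 ?_
  calc P.rieszKantorovich d₁ d₂ (r • x) ≤ P.dual d₁ (r • b) + P.dual d₂ (r • x - r • b) :=
        P.rieszKantorovich_le hd₁ hd₂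
          ⟨smul_nonneg hr.le hb.1, smul_le_smul_of_nonneg_left hb.2 hr.le⟩
    _ = r * (P.dual d₁ b + P.dual d₂ (x - b)) := by
        rw [← smul_sub, map_smul, map_smul, smul_eq_mul, smul_eq_mul, mul_add]

lemma rieszKantorovich_add {d₁ d₂ : D} (hd₁ : 0 ≤ d₁) (hd₂ : 0 ≤ d₂) {x y : A} (hx : 0 ≤ x)
    (hy : 0 ≤ y) :
    P.rieszKantorovich d₁ d₂ (x + y) = P.rieszKantorovich d₁ d₂ x + P.rieszKantorovich d₁ d₂ y := by
  refine le_antisymm ?_ (P.le_rieszKantorovich (add_nonneg hx hy) fun b hb => ?_)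
  · have key : ∀ c ∈ Set.Icc 0 y, P.rieszKantorovich d₁ d₂ (x + y) - P.rieszKantorovich d₁ d₂ x ≤
        P.dual d₁ c + P.dual d₂ (y - c) := by
      intro c hc
      have : P.rieszKantorovich d₁ d₂ (x + y) - (P.dual d₁ c + P.dual d₂ (y - c)) ≤
          P.rieszKantorovich d₁ d₂ x := P.le_rieszKantorovich hx fun b hb => by
        have h := P.rieszKantorovich_le hd₁ hd₂ (x := x + y) (b := b + c)
          ⟨add_nonneg hb.1 hc.1, add_le_add hb.2 hc.2⟩
        rw [add_sub_add_comm, map_add, map_add] at h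
        linarith
      linarith
    linarith [P.le_rieszKantorovich hy key]
  -- Riesz decomposition of `b ≤ x + y`
  have hbx : b ⊓ x ∈ Set.Icc 0 x := ⟨le_inf hb.1 hx, inf_le_right⟩
  have hby : (b - x)⁺ ∈ Set.Icc 0 y :=
    ⟨posPart_nonneg _, sup_le (sub_le_iff_le_add'.2 hb.2) hy⟩
  have hsplit := inf_add_posPart_sub b x
  calc P.rieszKantorovich d₁ d₂ x + P.rieszKantorovich d₁ d₂ y
      ≤ P.dual d₁ (b ⊓ x) + P.dual d₂ (x - b ⊓ x) +
          (P.dual d₁ (b - x)⁺ + P.dual d₂ (y - (b - x)⁺)) :=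
        add_le_add (P.rieszKantorovich_le hd₁ hd₂ hbx) (P.rieszKantorovich_le hd₁ hd₂ hby)
    _ = P.dual d₁ b + P.dual d₂ (x + y - b) := by
        conv_rhs => rw [← hsplit]
        simp only [map_add, map_sub]
        ring

end

variable [RieszSp D]

lemma le_of_dual_le {d d' : D} (h : ∀ a : A, 0 ≤ a → P.dual d a ≤ P.dual d' a) : d ≤ d' := by
  refine sub_nonneg.1 ((P.dual_order _).2 fun a ha => ?_)
  simpa only [map_sub, LinearMap.sub_apply, sub_nonneg] using h a ha

lemma dual_mono_left {d d' : D} (h : d ≤ d') {a : A} (ha : 0 ≤ a) :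
    P.dual d a ≤ P.dual d' a := by
  simpa only [map_sub, LinearMap.sub_apply, sub_nonneg] using P.dual_nonneg (sub_nonneg.2 h) ha

lemma dual_inf_le_add {d₁ d₂ : D} {b c : A} (hb : 0 ≤ b) (hc : 0 ≤ c) :
    P.dual (d₁ ⊓ d₂) (b + c) ≤ P.dual d₁ b + P.dual d₂ c := by
  rw [map_add]
  exact add_le_add (P.dual_mono_left inf_le_left hb) (P.dual_mono_left inf_le_right hc)

lemma bidual_mono {F : N} (hF : 0 ≤ F) {u v : D} (h : u ≤ v) :
    P.bidual F u ≤ P.bidual F v := by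
  simpa only [map_sub, sub_nonneg] using P.bidual_nonneg hF (sub_nonneg.2 h)

lemma abs_le_of_abs_dual_le {u v : D} (h : ∀ a : A, 0 ≤ a → |P.dual u a| ≤ P.dual v a) :
    |u| ≤ v :=
  abs_le'.2 ⟨P.le_of_dual_le fun a ha => (le_abs_self _).trans (h a ha),
    P.le_of_dual_le fun a ha => by
      simpa only [map_neg, LinearMap.neg_apply] using (neg_le_abs _).trans (h a ha)⟩

variable [RieszSp A]

lemma abs_dual_le (d : D) (a : A) : |P.dual d a| ≤ P.dual |d| |a| :=
  abs_apply_le_apply_abs P.dual (fun _ _ hd ha => P.dual_nonneg hd ha) d a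

lemma exists_isLUB_of_directedOn {S : Set D} (hne : S.Nonempty) (hdir : DirectedOn (· ≤ ·) S)
    (h0 : ∀ s ∈ S, 0 ≤ s) {d : D} (hd : ∀ s ∈ S, s ≤ d) :
    ∃ v : D, IsLUB S v ∧ ∀ a : A, 0 ≤ a → P.dual v a = sSup ((fun s => P.dual s a) '' S) := by
  set p : A → ℝ := fun a => sSup ((fun s => P.dual s a) '' S)
  have le_p : ∀ {a : A}, 0 ≤ a → ∀ s ∈ S, P.dual s a ≤ p a := fun ha s hs =>
    le_csSup ⟨P.dual d _, by rintro _ ⟨t, ht, rfl⟩; exact P.dual_mono_left (hd t ht) ha⟩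
      ⟨s, hs, rfl⟩
  have p_le : ∀ {a : A} {c : ℝ}, (∀ s ∈ S, P.dual s a ≤ c) → p a ≤ c := fun h =>
    csSup_le (hne.image _) (by rintro _ ⟨s, hs, rfl⟩; exact h s hs)
  have hadd : ∀ a b : A, 0 ≤ a → 0 ≤ b → p (a + b) = p a + p b := by
    intro a b ha hb
    refine le_antisymm (p_le fun s hs => ?_) ?_
    · rw [map_add]
      exact add_le_add (le_p ha s hs) (le_p hb s hs)
    · have key : ∀ t ∈ S, P.dual t b ≤ p (a + b) - p a := fun t ht =>
        le_sub_comm.1 <| p_le fun s hs => le_sub_iff_add_le.2 <| by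
          obtain ⟨u, hu, hsu, htu⟩ := hdir s hs t ht
          calc P.dual s a + P.dual t b ≤ P.dual u a + P.dual u b :=
                add_le_add (P.dual_mono_left hsu ha) (P.dual_mono_left htu hb)
            _ = P.dual u (a + b) := (map_add _ _ _).symm
            _ ≤ p (a + b) := le_p (add_nonneg ha hb) u hu
      linarith [p_le key]
  have hsmul : ∀ (r : ℝ) (a : A), 0 < r → 0 ≤ a → p (r • a) ≤ r * p a :=
    fun r a hr ha => p_le fun s hs => by
      rw [map_smul, smul_eq_mul]
      exact mul_le_mul_of_nonneg_left (le_p ha s hs) hr.le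
  obtain ⟨v, hv⟩ := P.exists_dual_eq_on_nonneg p hadd hsmul (d := d) fun a ha =>
    ⟨(P.dual_nonneg (h0 _ hne.some_mem) ha).trans (le_p ha _ hne.some_mem),
      p_le fun s hs => P.dual_mono_left (hd s hs) ha⟩
  refine ⟨v, ⟨fun s hs => P.le_of_dual_le fun a ha => ?_,
    fun w hw => P.le_of_dual_le fun a ha => ?_⟩, hv⟩
  · rw [hv a ha]
    exact le_p ha s hs
  · rw [hv a ha]
    exact p_le fun s hs => P.dual_mono_left (hw hs) ha

lemma exists_dual_add_dual_lt_of_inf_eq_zero {d₁ d₂ : D} (h : d₁ ⊓ d₂ = 0) {x : A}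
    (hx : 0 ≤ x) {ε : ℝ} (hε : 0 < ε) :
    ∃ b c : A, 0 ≤ b ∧ 0 ≤ c ∧ b + c = x ∧ P.dual d₁ b + P.dual d₂ c < ε := by
  have hd₁ : 0 ≤ d₁ := h ▸ inf_le_left
  have hd₂ : 0 ≤ d₂ := h ▸ inf_le_right
  obtain ⟨m, hm⟩ := P.exists_dual_eq_on_nonneg (P.rieszKantorovich d₁ d₂)
    (fun _ _ => P.rieszKantorovich_add hd₁ hd₂)
    (fun _ _ hr hy => P.rieszKantorovich_smul_le hd₁ hd₂ hr hy) (d := d₁) fun y hy =>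
      ⟨P.rieszKantorovich_nonneg hd₁ hd₂ hy,
        by simpa using P.rieszKantorovich_le hd₁ hd₂ (Set.right_mem_Icc.2 hy)⟩
  have hm₁ : m ≤ d₁ := P.le_of_dual_le fun y hy => by
    simpa [hm y hy] using P.rieszKantorovich_le hd₁ hd₂ (Set.right_mem_Icc.2 hy)
  have hm₂ : m ≤ d₂ := P.le_of_dual_le fun y hy => by
    simpa [hm y hy] using P.rieszKantorovich_le hd₁ hd₂ (Set.left_mem_Icc.2 hy)
  have hm₀ : 0 ≤ m := (P.dual_order m).2 fun y hy =>
    (hm y hy).symm ▸ P.rieszKantorovich_nonneg hd₁ hd₂ hy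
  have hx₀ : P.rieszKantorovich d₁ d₂ x = 0 := by
    rw [← hm x hx, le_antisymm (h ▸ le_inf hm₁ hm₂) hm₀, map_zero, LinearMap.zero_apply]
  have hne : ((fun b => P.dual d₁ b + P.dual d₂ (x - b)) '' Set.Icc 0 x).Nonempty :=
    ⟨_, 0, Set.left_mem_Icc.2 hx, rfl⟩
  obtain ⟨_, ⟨b, hb, rfl⟩, hlt⟩ := Real.lt_sInf_add_pos hne hε
  refine ⟨b, x - b, hb.1, sub_nonneg.2 hb.2, add_sub_cancel b x, ?_⟩
  change _ < P.rieszKantorovich d₁ d₂ x + ε at hlt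
  rwa [hx₀, zero_add] at hlt

end Evaluation

section FAlgebra
open Filter Topology

variable {A : Type*} [CommRing A] [Lattice A] [Module ℝ A] [FAlg A]
  {D : Type*} [AddCommGroup D] [Lattice D] [Module ℝ D]
  {N : Type*} [CommRing N] [Lattice N] [Module ℝ N] (P : DualSetting A D N)

lemma dsmul_nonneg {a : A} (ha : 0 ≤ a) {f : D} (hf : 0 ≤ f) : 0 ≤ P.dsmul a f :=
  (P.dual_order _).2 fun x hx => P.dsmul_eval a f x ▸ P.dual_nonneg hf (mul_nonneg ha hx)

protected lemma nsmul_nonneg {F : N} (hF : 0 ≤ F) {f : D} (hf : 0 ≤ f) : 0 ≤ P.nsmul F f :=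
  (P.dual_order _).2 fun a ha => P.nsmul_eval F f a ▸ P.bidual_nonneg hF (P.dsmul_nonneg ha hf)

variable [RieszSp D]

lemma dsmul_mono_left {a b : A} (h : a ≤ b) {f : D} (hf : 0 ≤ f) : P.dsmul a f ≤ P.dsmul b f :=
  P.le_of_dual_le fun x hx => by
    simpa only [P.dsmul_eval] using P.dual_mono_right hf (mul_le_mul_of_nonneg_right h hx)

lemma eq_zero_of_le_dsmul_of_dual_eq_zero {a : A} (ha : 0 ≤ a) {f e : D} (hf : 0 ≤ f) (he : 0 ≤ e)
    (hea : e ≤ P.dsmul a f) (h : P.dual e a = 0) : e = 0 := by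
  refine le_antisymm (P.le_of_dual_le fun x hx => ?_) he
  rw [map_zero, LinearMap.zero_apply]
  -- split `x` along `n • a`: `e` kills the part below `n • a`, and the rest is controlled by `f`
  refine nonpos_of_forall_nat_mul_le (C := P.dual f (x * x)) fun n => ?_
  have hlow : P.dual e (x ⊓ n • a) ≤ 0 := by
    have := P.dual_mono_right he (inf_le_right : x ⊓ n • a ≤ n • a)
    rwa [map_nsmul, h, smul_zero] at this
  have hhigh : P.dual e (x - n • a)⁺ ≤ P.dual f (a * (x - n • a)⁺) := by
    simpa only [P.dsmul_eval] using P.dual_mono_left hea (posPart_nonneg (x - n • a))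
  have hsq : n * P.dual f (a * (x - n • a)⁺) ≤ P.dual f (x * x) := by
    have := P.dual_mono_right hf (mul_posPart_sub_le_mul_self (nsmul_nonneg ha n) hx)
    rwa [smul_mul_assoc, map_nsmul, nsmul_eq_mul] at this
  have hx' : P.dual e x = P.dual e (x ⊓ n • a) + P.dual e (x - n • a)⁺ := by
    rw [← map_add, inf_add_posPart_sub]
  nlinarith [hx', (n.cast_nonneg : (0 : ℝ) ≤ n)]

lemma mul_dual_dsmul_inf_le {f g : D} (hf : 0 ≤ f) (hg : 0 ≤ g) {a x w c : A} (ha : 0 ≤ a)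
    (hx : 0 ≤ x) (hw : 0 ≤ w) (hc : 0 ≤ c) (hwc : w + c = a * x) (n : ℕ) :
    n * P.dual (P.dsmul a f ⊓ g) x ≤ P.dual f x + n * P.dual f w + n * (n * P.dual g c) := by
  -- on `x ⊓ n • c` the functional `g` is controlled by `g c`, and on `(x - n • c)⁺`
  -- the functional `f (a * ·)` by `f w` (through `mul_posPart_sub_le_add`)
  have hk : P.dual (P.dsmul a f ⊓ g) x ≤
      P.dual f (a * (x - n • c)⁺) + P.dual g (x ⊓ n • c) := by
    have := P.dual_inf_le_add (d₁ := P.dsmul a f) (d₂ := g) (posPart_nonneg (x - n • c))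
      (le_inf hx (nsmul_nonneg hc n))
    rwa [add_comm, inf_add_posPart_sub, P.dsmul_eval] at this
  have hfy : n * P.dual f (a * (x - n • c)⁺) ≤ n * P.dual f w + P.dual f x := by
    have := P.dual_mono_right hf (mul_posPart_sub_le_add (nsmul_nonneg ha n) hx
      (nsmul_nonneg hw n) (nsmul_nonneg hc n) (by rw [← smul_add, hwc, smul_mul_assoc]))
    rw [smul_mul_assoc, map_nsmul, map_add, map_nsmul] at this
    simpa only [nsmul_eq_mul] using this
  have hgc : P.dual g (x ⊓ n • c) ≤ n * P.dual g c := by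
    have := P.dual_mono_right hg (inf_le_right : x ⊓ n • c ≤ n • c)
    rw [map_nsmul] at this
    simpa only [nsmul_eq_mul] using this
  have hn : (0 : ℝ) ≤ n := n.cast_nonneg
  calc n * P.dual (P.dsmul a f ⊓ g) x
      ≤ n * P.dual f (a * (x - n • c)⁺) + n * P.dual g (x ⊓ n • c) := by
        rw [← mul_add]
        exact mul_le_mul_of_nonneg_left hk hn
    _ ≤ P.dual f x + n * P.dual f w + n * (n * P.dual g c) := by
        linarith [mul_le_mul_of_nonneg_left hgc hn]

lemma dsmul_inf_eq_zero {f g : D} (h : f ⊓ g = 0) {a : A} (ha : 0 ≤ a) :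
    P.dsmul a f ⊓ g = 0 := by
  have hf : 0 ≤ f := h ▸ inf_le_left
  have hg : 0 ≤ g := h ▸ inf_le_right
  refine le_antisymm (P.le_of_dual_le fun x hx => ?_) (le_inf (P.dsmul_nonneg ha hf) hg)
  rw [map_zero, LinearMap.zero_apply]
  refine nonpos_of_forall_nat_mul_le (C := P.dual f x) fun n =>
    le_of_forall_pos_le_add fun η hη => ?_
  have hn : (0 : ℝ) ≤ n := n.cast_nonneg
  set K : ℝ := n * n + n + 1
  have hK : 0 < K := by positivity
  obtain ⟨w, c, hw, hc, hwc, hsmall⟩ :=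
    P.exists_dual_add_dual_lt_of_inf_eq_zero h (mul_nonneg ha hx) (div_pos hη hK)
  have hKη : K * (P.dual f w + P.dual g c) ≤ η := ((lt_div_iff₀' hK).1 hsmall).le
  have hw₀ := P.dual_nonneg hf hw
  have hc₀ := P.dual_nonneg hg hc
  nlinarith [P.mul_dual_dsmul_inf_le hf hg ha hx hw hc hwc n,
    mul_nonneg (mul_nonneg hn hn) hw₀, mul_nonneg hn hc₀]

lemma exists_isLUB_tail {d : D} {e : ℕ → D} (he₀ : ∀ n, 0 ≤ e n) (hed : ∀ n, e n ≤ d)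
    {a : A} (ha : 0 ≤ a) (hea : ∀ n, P.dual (e n) a ≤ (1 / 2) ^ n) (M : ℕ) :
    ∃ v : D, IsLUB (e '' Set.Ici M) v ∧ P.dual v a ≤ 2 * (1 / 2) ^ M := by
  set u : ℕ → D := fun k => e (M + k)
  have hu₀ : ∀ k, 0 ≤ u k := fun k => he₀ _
  obtain ⟨v, hv, hva⟩ := P.exists_isLUB_of_directedOn (Set.range_nonempty (partialSups u))
    (directedOn_range.2 (partialSups u).monotone.directed_le)
    (by rintro _ ⟨k, rfl⟩; exact (hu₀ 0).trans (le_partialSups_of_le u (Nat.zero_le k)))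
    (d := d) (by rintro _ ⟨k, rfl⟩; exact partialSups_le u k d fun j _ => hed _)
  refine ⟨v, ⟨?_, fun w hw => hv.2 ?_⟩, ?_⟩
  · rintro _ ⟨n, hn, rfl⟩
    have hun : u (n - M) = e n := by simp only [u, Nat.add_sub_cancel' (Set.mem_Ici.1 hn)]
    exact hun ▸ (le_partialSups u (n - M)).trans (hv.1 ⟨n - M, rfl⟩)
  · rintro _ ⟨k, rfl⟩
    exact partialSups_le u k w fun j _ => hw ⟨M + j, Nat.le_add_right M j, rfl⟩
  · rw [hva a ha]
    refine csSup_le ((Set.range_nonempty _).image _) ?_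
    rintro _ ⟨_, ⟨k, rfl⟩, rfl⟩
    calc P.dual (partialSups u k) a ≤ ∑ j ∈ Finset.range (k + 1), P.dual (u j) a := by
          simpa only [map_sum, LinearMap.sum_apply] using
            P.dual_mono_left (partialSups_le_sum hu₀ k) ha
      _ ≤ ∑ j ∈ Finset.range (k + 1), (1 / 2) ^ M * (1 / 2 : ℝ) ^ j :=
          Finset.sum_le_sum fun j _ => (hea _).trans_eq (pow_add _ _ _)
      _ ≤ 2 * (1 / 2) ^ M := by
          rw [← Finset.mul_sum, mul_comm]
          exact mul_le_mul_of_nonneg_right (sum_geometric_two_le _) (by positivity)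

lemma tendsto_bidual_of_le_dsmul {F : N} (hF : 0 ≤ F) {a : A} (ha : 0 ≤ a) {f : D} (hf : 0 ≤ f)
    {e : ℕ → D} (he₀ : ∀ n, 0 ≤ e n) (hef : ∀ n, e n ≤ P.dsmul a f)
    (hea : ∀ n, P.dual (e n) a ≤ (1 / 2) ^ n) :
    Tendsto (fun n => P.bidual F (e n)) atTop (𝓝 0) := by
  choose V hV hVa using P.exists_isLUB_tail he₀ hef ha hea
  have hV_anti : Antitone V := fun M M' h =>
    (hV M').mono (hV M) (Set.image_mono (Set.Ici_subset_Ici.2 h))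
  have he_V : ∀ {M n}, M ≤ n → e n ≤ V M := fun {M n} h => (hV M).1 ⟨n, h, rfl⟩
  have hV₀ : ∀ M, 0 ≤ V M := fun M => (he₀ M).trans (he_V le_rfl)
  -- the tail suprema decrease to `0`: a common lower bound `l` has `l⁺ ≤ f ⋅ a` and `l⁺ a = 0`
  have hglb : IsGLB (Set.range V) 0 := by
    refine ⟨by rintro _ ⟨M, rfl⟩; exact hV₀ M, fun l hl => ?_⟩
    have hlV : ∀ M, l⁺ ≤ V M := fun M => sup_le (hl ⟨M, rfl⟩) (hV₀ M)
    have hla : P.dual l⁺ a = 0 := by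
      have hlim : Tendsto (fun M : ℕ => 2 * (1 / 2 : ℝ) ^ M) atTop (𝓝 0) := by
        simpa using (tendsto_pow_atTop_nhds_zero_of_lt_one (r := (1 / 2 : ℝ)) (by norm_num)
          (by norm_num)).const_mul 2
      exact le_antisymm
        (ge_of_tendsto' hlim fun M => (P.dual_mono_left (hlV M) ha).trans (hVa M))
        (P.dual_nonneg (posPart_nonneg l) ha)
    have hlf : l⁺ ≤ P.dsmul a f := (hlV 0).trans ((hV 0).2 (by rintro _ ⟨n, -, rfl⟩; exact hef n))
    exact (le_posPart l).trans
      (P.eq_zero_of_le_dsmul_of_dual_eq_zero ha hf (posPart_nonneg l) hlf hla).le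
  refine Metric.tendsto_atTop.2 fun ε hε => ?_
  obtain ⟨_, ⟨M, rfl⟩, hM⟩ := P.bidual_cont F (Set.range V) (Set.range_nonempty V)
    (directedOn_range.2 hV_anti.directed_ge) hglb ε hε
  refine ⟨M, fun n hn => ?_⟩
  rw [Real.dist_0_eq_abs, abs_of_nonneg (P.bidual_nonneg hF (he₀ n))]
  exact (P.bidual_mono hF (he_V le_rfl)).trans_lt
    ((le_abs_self _).trans_lt (hM _ ⟨n, rfl⟩ (hV_anti hn)))

protected lemma nsmul_inf_eq_zero {f g : D} (h : f ⊓ g = 0) {F : N} (hF : 0 ≤ F) :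
    P.nsmul F f ⊓ g = 0 := by
  have hf : 0 ≤ f := h ▸ inf_le_left
  have hg : 0 ≤ g := h ▸ inf_le_right
  set k := P.nsmul F f ⊓ g
  have hk : 0 ≤ k := le_inf (P.nsmul_nonneg hF hf) hg
  refine le_antisymm (P.le_of_dual_le fun a ha => ?_) hk
  rw [map_zero, LinearMap.zero_apply]
  have hka : k ⊓ P.dsmul a f = 0 := le_antisymm
    ((inf_le_inf_right _ inf_le_right).trans_eq (by rw [inf_comm, P.dsmul_inf_eq_zero h ha]))
    (le_inf hk (P.dsmul_nonneg ha hf))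
  choose b c hb hc hbc hsmall using fun n : ℕ =>
    P.exists_dual_add_dual_lt_of_inf_eq_zero hka ha (pow_pos (one_half_pos (α := ℝ)) n)
  have hca : ∀ n, P.dual (P.dsmul (c n) f) a ≤ P.dual (P.dsmul a f) (c n) := fun n => by
    rw [P.dsmul_eval, P.dsmul_eval, mul_comm]
  have hbound : ∀ n, P.dual k a ≤ (1 / 2) ^ n + P.bidual F (P.dsmul (c n) f) := fun n => by
    have h₁ : P.dual k a = P.dual k (b n) + P.dual k (c n) := by rw [← map_add, hbc]
    have h₂ : P.dual k (c n) ≤ P.bidual F (P.dsmul (c n) f) :=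
      P.nsmul_eval F f (c n) ▸ P.dual_mono_left inf_le_left (hc n)
    linarith [hsmall n, P.dual_nonneg (P.dsmul_nonneg ha hf) (hc n)]
  have hlim : Tendsto (fun n => (1 / 2 : ℝ) ^ n + P.bidual F (P.dsmul (c n) f)) atTop (𝓝 0) := by
    simpa using (tendsto_pow_atTop_nhds_zero_of_lt_one (r := (1 / 2 : ℝ)) (by norm_num)
      (by norm_num)).add (P.tendsto_bidual_of_le_dsmul hF ha hf
        (fun n => P.dsmul_nonneg (hc n) hf)
        (fun n => P.dsmul_mono_left (hbc n ▸ le_add_of_nonneg_left (hb n)) hf)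
        fun n => (hca n).trans (by linarith [hsmall n, P.dual_nonneg hk (hb n)]))
  exact ge_of_tendsto' hlim hbound

lemma abs_dsmul_le {a : A} (ha : 0 ≤ a) (f : D) : |P.dsmul a f| ≤ P.dsmul a |f| :=
  P.abs_le_of_abs_dual_le fun x hx => by
    simpa only [P.dsmul_eval, abs_of_nonneg (mul_nonneg ha hx)] using P.abs_dual_le f (a * x)

lemma abs_nsmul_le [RieszSp N] (F : N) (f : D) : |P.nsmul F f| ≤ P.nsmul |F| |f| :=
  P.abs_le_of_abs_dual_le fun a ha => by
    rw [P.nsmul_eval, P.nsmul_eval]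
    exact (abs_apply_le_apply_abs P.bidual (fun _ _ hF hd => P.bidual_nonneg hF hd) F _).trans
      (P.bidual_mono (abs_nonneg F) (P.abs_dsmul_le ha f))

end FAlgebra

end DualSetting

variable {A : Type*} [CommRing A] [Lattice A] [Module ℝ A] [FAlg A]
variable {D : Type*} [AddCommGroup D] [Lattice D] [Module ℝ D] [RieszSp D]
variable {N : Type*} [CommRing N] [Lattice N] [Module ℝ N] [FAlg N]
variable [P : DualSetting A D N]

/-- If `f ⊥ g` in `A^∼`, then `F ⋅ f ⊥ G ⋅ g` for all `F, G ∈ (A^∼)^∼_n`. -/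
theorem stmt3 (f g : D) (hfg : |f| ⊓ |g| = 0) (F G : N) :
    |P.nsmul F f| ⊓ |P.nsmul G g| = 0 := by
  have h₁ : P.nsmul |F| |f| ⊓ |g| = 0 := P.nsmul_inf_eq_zero hfg (abs_nonneg F)
  have h₂ : P.nsmul |G| |g| ⊓ P.nsmul |F| |f| = 0 :=
    P.nsmul_inf_eq_zero (by rwa [inf_comm]) (abs_nonneg G)
  refine le_antisymm ?_ (le_inf (abs_nonneg _) (abs_nonneg _))
  calc |P.nsmul F f| ⊓ |P.nsmul G g| ≤ P.nsmul |F| |f| ⊓ P.nsmul |G| |g| :=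
        inf_le_inf (P.abs_nsmul_le F f) (P.abs_nsmul_le G g)
    _ = 0 := by rw [inf_comm, h₂]
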